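/- In the Mallows model with reference vote V : c_1 > c_2 > … > c_m and the 'unfolded' axis A : … c_6 c_4 c_2 c_1 c_3 c_5 …, every vote at Kendall tau distance 1 from V is single-peaked with respect to A (there are exactly m−1 such votes), and at least (m−2)(m−3)/2 votes at Kendall tau distance 2 from V are single-peaked with respect to A. Consequently, the probability that a single Mallows-sampled vote is single-peaked with respect to A is at least (1 + φ(m−1) + φ²(m−2)(m−3)/2)/Z, and the probability that an (n,m)-election of n independent Mallows votes is single-peaked is at least ((1 + φ(m−1) + φ²(m−2)(m−3)/2)/Z)^n. -/

import Mathlib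

open scoped Classical

/-- Single-peakedness of a vote `W` (rank function, smaller = more preferred) with
respect to an axis given by a position function `p` on the candidates. -/
def SPpos {m : ℕ} (W : Equiv.Perm (Fin m)) (p : Fin m → ℕ) : Prop :=
  ∀ c₁ c₂ c₃ : Fin m, ¬(p c₁ < p c₂ ∧ p c₂ < p c₃ ∧ W c₁ < W c₂ ∧ W c₃ < W c₂)

/-- An election is single-peaked if some axis (a linear order on the candidates,
given by its position function) works for all votes. -/
def SPElection {n m : ℕ} (P : Fin n → Equiv.Perm (Fin m)) : Prop :=
  ∃ A : Equiv.Perm (Fin m), ∀ i, SPpos (P i) (fun c => (A c : ℕ))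

/-- Kendall tau distance from `W` to the identity reference vote
`V : c_1 > c_2 > … > c_m` (candidate `c_{k+1}` is index `k`, `V` ranks it `k`-th). -/
def kt {m : ℕ} (W : Equiv.Perm (Fin m)) : ℕ :=
  (Finset.univ.filter fun p : Fin m × Fin m => p.1 < p.2 ∧ W p.2 < W p.1).card

/-- The "unfolded" axis `A : … c_6 c_4 c_2 c_1 c_3 c_5 …`: position of candidate
`c_{k+1}` (index `k`) on the axis, even-indexed candidates to the left of `c_1`,
odd-indexed to the right. -/
def axisA (m : ℕ) : Fin m → ℕ := fun k =>
  if k.val % 2 = 1 then m / 2 - (k.val + 1) / 2 else m / 2 + k.val / 2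

/-- Mallows normalization constant `Z = ∏_{j=1}^m (1 + φ + … + φ^{j−1})`. -/
noncomputable def Zm (m : ℕ) (φ : ℝ) : ℝ :=
  ∏ j ∈ Finset.range m, ∑ i ∈ Finset.range (j + 1), φ ^ i

/-! Every vote at Kendall tau distance one from `V` swaps two neighbours `c_a, c_{a+1}`, and
products of two such swaps at positions `i + 2 ≤ j` are `C(m-2, 2)` distinct votes at distance
two. All these votes move every candidate by at most one rank, so they keep candidates of equal
parity in the order of `V`; along the axis `A` the index grows within one parity class as one
moves away from `c_1`, so no such vote has a valley. Summing Mallows weights over them gives the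
bound for one vote, and `n` votes that are all single-peaked with respect to `A` form a
single-peaked election, whence the `n`-th power. -/

open Finset

def adjSwap (m a : ℕ) : Equiv.Perm (Fin m) :=
  if h : a + 1 < m then Equiv.swap ⟨a, by omega⟩ ⟨a + 1, h⟩ else 1

lemma adjSwap_val {m a : ℕ} (h : a + 1 < m) (x : Fin m) :
    (adjSwap m a x : ℕ) = if (x : ℕ) = a then a + 1 else if (x : ℕ) = a + 1 then a else x := by
  rw [adjSwap, dif_pos h, Equiv.swap_apply_def]
  split_ifs <;> simp_all [Fin.ext_iff]

lemma adjSwap_mul_self (m a : ℕ) : adjSwap m a * adjSwap m a = 1 := by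
  unfold adjSwap
  split_ifs <;> simp

lemma adjSwap_lt_adjSwap {m a : ℕ} (h : a + 1 < m) {x y : Fin m} (hxy : x < y)
    (hne : ¬((x : ℕ) = a ∧ (y : ℕ) = a + 1)) : adjSwap m a x < adjSwap m a y := by
  rw [Fin.lt_def] at hxy ⊢
  rw [adjSwap_val h, adjSwap_val h]
  split_ifs <;> omega

lemma kt_eq_card_of_mem_iff {m : ℕ} (W : Equiv.Perm (Fin m)) (s : Finset (Fin m × Fin m))
    (h : ∀ x y : Fin m, x < y ∧ W y < W x ↔ (x, y) ∈ s) : kt W = #s := by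
  unfold kt
  congr 1
  ext ⟨x, y⟩
  simp [h]

lemma kt_one (m : ℕ) : kt (1 : Equiv.Perm (Fin m)) = 0 := by
  rw [kt, card_eq_zero, filter_eq_empty_iff]
  exact fun p _ h => h.1.asymm h.2

lemma kt_adjSwap {m a : ℕ} (h : a + 1 < m) : kt (adjSwap m a) = 1 := by
  rw [kt_eq_card_of_mem_iff _ {(⟨a, by omega⟩, ⟨a + 1, h⟩)}, card_singleton]
  intro x y
  simp only [mem_singleton, Prod.ext_iff, Fin.ext_iff, Fin.lt_def, adjSwap_val h]
  split_ifs <;> omega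

lemma kt_adjSwap_mul_adjSwap {m i j : ℕ} (hij : i + 2 ≤ j) (hj : j + 1 < m) :
    kt (adjSwap m i * adjSwap m j) = 2 := by
  rw [kt_eq_card_of_mem_iff _ {(⟨i, by omega⟩, ⟨i + 1, by omega⟩), (⟨j, by omega⟩, ⟨j + 1, hj⟩)},
    card_pair (by simp [Prod.ext_iff, Fin.ext_iff]; omega)]
  intro x y
  simp only [mem_insert, mem_singleton, Prod.ext_iff, Fin.ext_iff, Fin.lt_def,
    Equiv.Perm.mul_apply, adjSwap_val hj, adjSwap_val (show i + 1 < m by omega)]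
  split_ifs <;> omega

lemma eq_adjSwap_of_kt_eq_one {m : ℕ} {W : Equiv.Perm (Fin m)} (h : kt W = 1) :
    ∃ a, a + 1 < m ∧ W = adjSwap m a := by
  -- The unique inversion `(p, q)` is adjacent, since a candidate strictly between `p` and `q`
  -- would form a second one; undoing it leaves a strictly monotone permutation.
  obtain ⟨⟨p, q⟩, hpq⟩ := card_eq_one.mp h
  have inversion_iff : ∀ x y, x < y ∧ W y < W x ↔ x = p ∧ y = q := fun x y => by
    simpa using congrArg ((x, y) ∈ ·) hpq
  obtain ⟨hlt, hW⟩ := (inversion_iff p q).mpr ⟨rfl, rfl⟩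
  have hq : (q : ℕ) = p + 1 := by
    by_contra hne
    let r : Fin m := ⟨p + 1, by omega⟩
    have hpr : p < r := by rw [Fin.lt_def]; simp [r]
    have hrq : r < q := by rw [Fin.lt_def] at hlt ⊢; simp only [r]; omega
    rcases lt_or_gt_of_ne (W.injective.ne hpr.ne') with h | h
    · exact hrq.ne ((inversion_iff p r).mp ⟨hpr, h⟩).2
    · exact hpr.ne' ((inversion_iff r q).mp ⟨hrq, hW.trans h⟩).1
  have hp : (p : ℕ) + 1 < m := hq ▸ q.isLt
  refine ⟨p, hp, ?_⟩
  have hmono : StrictMono (W * adjSwap m p) := by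
    intro x y hxy
    simp only [Equiv.Perm.mul_apply]
    by_cases hxy' : (x : ℕ) = p ∧ (y : ℕ) = p + 1
    · have hx : adjSwap m p x = q := by rw [Fin.ext_iff, adjSwap_val hp]; simp [hxy', hq]
      have hy : adjSwap m p y = p := by rw [Fin.ext_iff, adjSwap_val hp]; simp [hxy']
      rwa [hx, hy]
    · have hs := adjSwap_lt_adjSwap hp hxy hxy'
      refine lt_of_le_of_ne (not_lt.mp fun hinv => ?_) (W.injective.ne hs.ne)
      obtain ⟨hx, hy⟩ := (inversion_iff _ _).mp ⟨hs, hinv⟩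
      rw [Fin.ext_iff, adjSwap_val hp] at hx hy
      rw [Fin.lt_def] at hxy
      split_ifs at hx hy <;> omega
  have hone : W * adjSwap m p = 1 := Equiv.ext fun _ => hmono.apply_eq
  calc W = W * adjSwap m p * adjSwap m p := by rw [mul_assoc, adjSwap_mul_self, mul_one]
    _ = adjSwap m p := by rw [hone, one_mul]

def MovesAtMostOne {m : ℕ} (W : Equiv.Perm (Fin m)) : Prop :=
  ∀ x : Fin m, (x : ℕ) ≤ W x + 1 ∧ (W x : ℕ) ≤ x + 1

lemma MovesAtMostOne.lt_of_mod_two_eq {m : ℕ} {W : Equiv.Perm (Fin m)}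
    (hW : MovesAtMostOne W) {x y : Fin m} (hxy : x < y)
    (hpar : (x : ℕ) % 2 = y % 2) : W x < W y := by
  have hne : (W x : ℕ) ≠ W y := Fin.val_ne_of_ne (W.injective.ne hxy.ne)
  rw [Fin.lt_def] at hxy ⊢
  have := hW x
  have := hW y
  omega

lemma even_and_lt_of_axisA_lt {m : ℕ} {c d : Fin m} (hc : (c : ℕ) % 2 = 0)
    (h : axisA m c < axisA m d) : (d : ℕ) % 2 = 0 ∧ c < d := by
  rw [Fin.lt_def]
  simp only [axisA] at h
  split_ifs at h <;> omega

lemma odd_and_lt_of_axisA_lt {m : ℕ} {c d : Fin m} (hc : (c : ℕ) % 2 = 1)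
    (h : axisA m d < axisA m c) : (d : ℕ) % 2 = 1 ∧ c < d := by
  have := c.isLt
  rw [Fin.lt_def]
  simp only [axisA] at h
  split_ifs at h <;> omega

lemma MovesAtMostOne.spPos_axisA {m : ℕ} {W : Equiv.Perm (Fin m)}
    (hW : MovesAtMostOne W) : SPpos W (axisA m) := by
  rintro c₁ c₂ c₃ ⟨h₁₂, h₂₃, hW₁, hW₃⟩
  rcases Nat.mod_two_eq_zero_or_one c₂ with hc₂ | hc₂
  · obtain ⟨hc₃, hlt⟩ := even_and_lt_of_axisA_lt hc₂ h₂₃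
    exact hW₃.asymm (hW.lt_of_mod_two_eq hlt (by rw [hc₂, hc₃]))
  · obtain ⟨hc₁, hlt⟩ := odd_and_lt_of_axisA_lt hc₂ h₁₂
    exact hW₁.asymm (hW.lt_of_mod_two_eq hlt (by rw [hc₂, hc₁]))

lemma movesAtMostOne_adjSwap {m a : ℕ} (h : a + 1 < m) : MovesAtMostOne (adjSwap m a) := by
  intro x
  rw [adjSwap_val h]
  split_ifs <;> omega

lemma movesAtMostOne_adjSwap_mul_adjSwap {m i j : ℕ} (hij : i + 2 ≤ j) (hj : j + 1 < m) :
    MovesAtMostOne (adjSwap m i * adjSwap m j) := by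
  intro x
  rw [Equiv.Perm.mul_apply, adjSwap_val (show i + 1 < m by omega), adjSwap_val hj]
  split_ifs <;> omega

lemma spPos_axisA_of_kt_eq_one {m : ℕ} {W : Equiv.Perm (Fin m)} (h : kt W = 1) :
    SPpos W (axisA m) := by
  obtain ⟨a, ha, rfl⟩ := eq_adjSwap_of_kt_eq_one h
  exact (movesAtMostOne_adjSwap ha).spPos_axisA

lemma adjSwap_mul_adjSwap_inj {m i j i' j' : ℕ} (hij : i + 2 ≤ j) (hj : j + 1 < m)
    (hij' : i' + 2 ≤ j') (hj' : j' + 1 < m)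
    (he : adjSwap m i * adjSwap m j = adjSwap m i' * adjSwap m j') : i = i' ∧ j = j' := by
  have hval (x : Fin m) := congrArg (fun W : Equiv.Perm (Fin m) => (W x : ℕ)) he
  simp only [Equiv.Perm.mul_apply] at hval
  have hmin := hval ⟨min i i', by omega⟩
  have hmax := hval ⟨max j j' + 1, by omega⟩
  rw [adjSwap_val (show i + 1 < m by omega), adjSwap_val hj,
    adjSwap_val (show i' + 1 < m by omega), adjSwap_val hj'] at hmin hmax
  simp only at hmin hmax
  constructor
  · split_ifs at hmin <;> omega
  · split_ifs at hmax <;> omega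

lemma card_kt_eq_one (m : ℕ) : #{W : Equiv.Perm (Fin m) | kt W = 1} = m - 1 := by
  have himage : ({W | kt W = 1} : Finset (Equiv.Perm (Fin m))) =
      (range (m - 1)).image (adjSwap m) := by
    ext W
    simp only [mem_filter, mem_univ, true_and, mem_image, mem_range]
    constructor
    · intro h
      obtain ⟨a, ha, rfl⟩ := eq_adjSwap_of_kt_eq_one h
      exact ⟨a, by omega, rfl⟩
    · rintro ⟨a, ha, rfl⟩
      exact kt_adjSwap (by omega)
  have hinj : Set.InjOn (adjSwap m) (range (m - 1)) := by
    intro a ha b hb he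
    simp only [mem_coe, mem_range] at ha hb
    have hval := congrArg (fun W : Equiv.Perm (Fin m) => (W ⟨a, by omega⟩ : ℕ)) he
    simp only [adjSwap_val (show a + 1 < m by omega), adjSwap_val (show b + 1 < m by omega)]
      at hval
    split_ifs at hval <;> omega
  rw [himage, card_image_of_injOn hinj, card_range]

lemma choose_le_card_kt_eq_two_spPos (m : ℕ) :
    (m - 2).choose 2 ≤ #{W : Equiv.Perm (Fin m) | kt W = 2 ∧ SPpos W (axisA m)} := by
  let D := (range (m - 2)).sigma range
  have hD : ∀ q ∈ D, q.2 + 2 ≤ q.1 + 1 ∧ q.1 + 1 + 1 < m := by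
    simp only [D, mem_sigma, mem_range]
    omega
  let g : (_ : ℕ) × ℕ → Equiv.Perm (Fin m) := fun q => adjSwap m q.2 * adjSwap m (q.1 + 1)
  have hinj : Set.InjOn g D := by
    rintro ⟨k, i⟩ hq ⟨k', i'⟩ hq' he
    obtain ⟨hi, hk⟩ := hD _ hq
    obtain ⟨hi', hk'⟩ := hD _ hq'
    obtain ⟨hii', hkk'⟩ := adjSwap_mul_adjSwap_inj hi hk hi' hk' he
    simp only [Nat.add_right_cancel_iff] at hii' hkk'
    rw [hii', hkk']
  have hcard : #D = (m - 2).choose 2 := by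
    rw [card_sigma]
    simp only [card_range, sum_range_id, Nat.choose_two_right]
  calc (m - 2).choose 2 = #(D.image g) := by rw [card_image_of_injOn hinj, hcard]
    _ ≤ _ := card_le_card fun W hW => by
      obtain ⟨q, hq, rfl⟩ := mem_image.mp hW
      obtain ⟨hi, hk⟩ := hD q hq
      simpa using ⟨kt_adjSwap_mul_adjSwap hi hk,
        (movesAtMostOne_adjSwap_mul_adjSwap hi hk).spPos_axisA⟩

lemma sum_card_fiber_mul_pow_le {α : Type*} (s : Finset α) (f : α → ℕ) (t : Finset ℕ)
    {φ : ℝ} (hφ : 0 ≤ φ) : ∑ i ∈ t, #{x ∈ s | f x = i} * φ ^ i ≤ ∑ x ∈ s, φ ^ f x := by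
  calc ∑ i ∈ t, #{x ∈ s | f x = i} * φ ^ i = ∑ x ∈ s with f x ∈ t, φ ^ f x := by
        rw [← sum_fiberwise_of_maps_to' (g := f) (fun x hx => (mem_filter.mp hx).2)]
        refine sum_congr rfl fun i hi => ?_
        rw [sum_const, nsmul_eq_mul, filter_filter]
        congr 3
        exact filter_congr fun x _ => ⟨fun h => ⟨h ▸ hi, h⟩, And.right⟩
    _ ≤ ∑ x ∈ s, φ ^ f x :=
      sum_le_sum_of_subset_of_nonneg (filter_subset _ _) fun _ _ _ => pow_nonneg hφ _

lemma sum_pow_le_sum_filter_prod {α : Type*} [Fintype α] (s : Finset α) (w : α → ℝ)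
    (hw : ∀ a, 0 ≤ w a) (n : ℕ) (Q : (Fin n → α) → Prop) [DecidablePred Q]
    (hQ : ∀ P : Fin n → α, (∀ i, P i ∈ s) → Q P) :
    (∑ a ∈ s, w a) ^ n ≤ ∑ P with Q P, ∏ i, w (P i) := by
  rw [sum_pow']
  refine sum_le_sum_of_subset_of_nonneg (fun P hP => ?_) fun P _ _ => prod_nonneg fun i _ => hw _
  exact mem_filter.mpr ⟨mem_univ _, hQ P (Fintype.mem_piFinset.mp hP)⟩

lemma exists_perm_val_eq_axisA (m : ℕ) : ∃ A : Equiv.Perm (Fin m), ∀ c, (A c : ℕ) = axisA m c := by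
  have hlt (c : Fin m) : axisA m c < m := by
    have := c.isLt
    unfold axisA
    split_ifs <;> omega
  have hinj : Function.Injective fun c : Fin m => (⟨axisA m c, hlt c⟩ : Fin m) := by
    intro c d h
    have := c.isLt
    have := d.isLt
    simp only [Fin.mk.injEq, axisA] at h
    split_ifs at h <;> omega
  exact ⟨Equiv.ofBijective _ (Finite.injective_iff_bijective.mp hinj), fun _ => rfl⟩

lemma cast_choose_two_sub_two {m : ℕ} (hm : 2 ≤ m) :
    ((m - 2).choose 2 : ℝ) = ((m : ℝ) - 2) * ((m : ℝ) - 3) / 2 := by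
  rw [Nat.cast_choose_two, Nat.cast_sub hm]
  ring

lemma lower_bound_le_sum_pow_kt_spPos {m : ℕ} (hm : 2 ≤ m) {φ : ℝ} (hφ : 0 ≤ φ) :
    1 + φ * ((m : ℝ) - 1) + φ ^ 2 * (((m : ℝ) - 2) * ((m : ℝ) - 3) / 2) ≤
      ∑ W ∈ univ.filter fun W : Equiv.Perm (Fin m) => SPpos W (axisA m), φ ^ kt W := by
  set S : Finset (Equiv.Perm (Fin m)) := {W | SPpos W (axisA m)}
  have hone : MovesAtMostOne (1 : Equiv.Perm (Fin m)) := fun x => by simp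
  have h0 : 1 ≤ #{W ∈ S | kt W = 0} := card_pos.mpr ⟨1, by simp [S, kt_one, hone.spPos_axisA]⟩
  have h1 : #{W ∈ S | kt W = 1} = m - 1 := by
    rw [← card_kt_eq_one, filter_filter]
    exact congrArg card <| filter_congr fun W _ =>
      ⟨And.right, fun h => ⟨spPos_axisA_of_kt_eq_one h, h⟩⟩
  have h2 : (m - 2).choose 2 ≤ #{W ∈ S | kt W = 2} := by
    refine (choose_le_card_kt_eq_two_spPos m).trans (card_le_card fun W hW => ?_)
    simp only [S, mem_filter, mem_univ, true_and] at hW ⊢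
    exact hW.symm
  calc _ = 1 * φ ^ 0 + ((m - 1 : ℕ) : ℝ) * φ ^ 1 + ((m - 2).choose 2 : ℝ) * φ ^ 2 := by
        rw [cast_choose_two_sub_two hm, Nat.cast_sub (by omega)]
        ring
    _ ≤ ∑ i ∈ range 3, #{W ∈ S | kt W = i} * φ ^ i := by
        simp only [sum_range_succ, sum_range_zero, zero_add, h1]
        gcongr
        all_goals exact_mod_cast ‹_›
    _ ≤ _ := sum_card_fiber_mul_pow_le S kt _ hφ

theorem mallows_single_peaked_bounds_general (m n : ℕ) (hm : 2 ≤ m)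
    (φ : ℝ) (hφ0 : 0 < φ) :
    (∀ W : Equiv.Perm (Fin m), kt W = 1 → SPpos W (axisA m)) ∧
    {W : Equiv.Perm (Fin m) | kt W = 1}.ncard = m - 1 ∧
    (m - 2) * (m - 3) / 2 ≤
      {W : Equiv.Perm (Fin m) | kt W = 2 ∧ SPpos W (axisA m)}.ncard ∧
    (1 + φ * ((m : ℝ) - 1) + φ ^ 2 * (((m : ℝ) - 2) * ((m : ℝ) - 3) / 2)) / Zm m φ ≤
      (∑ W ∈ Finset.univ.filter fun W : Equiv.Perm (Fin m) => SPpos W (axisA m),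
        φ ^ kt W) / Zm m φ ∧
    ((1 + φ * ((m : ℝ) - 1) + φ ^ 2 * (((m : ℝ) - 2) * ((m : ℝ) - 3) / 2)) / Zm m φ) ^ n ≤
      (∑ P ∈ Finset.univ.filter fun P : Fin n → Equiv.Perm (Fin m) => SPElection P,
        ∏ i, φ ^ kt (P i)) / (Zm m φ) ^ n := by
  have hsum := lower_bound_le_sum_pow_kt_spPos hm hφ0.le
  have hZ : 0 ≤ Zm m φ := prod_nonneg fun j _ => sum_nonneg fun i _ => pow_nonneg hφ0.le i
  have hlower : 0 ≤ 1 + φ * ((m : ℝ) - 1) + φ ^ 2 * (((m : ℝ) - 2) * ((m : ℝ) - 3) / 2) := by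
    have : (1 : ℝ) ≤ m := by exact_mod_cast (show 1 ≤ m by omega)
    rw [← cast_choose_two_sub_two hm]
    exact add_nonneg (add_nonneg zero_le_one (mul_nonneg hφ0.le (by linarith))) (by positivity)
  obtain ⟨A, hA⟩ := exists_perm_val_eq_axisA m
  have helection : ∀ P : Fin n → Equiv.Perm (Fin m),
      (∀ i, P i ∈ univ.filter fun W => SPpos W (axisA m)) → SPElection P :=
    fun P hP => ⟨A, fun i => by simpa [hA] using hP i⟩
  refine ⟨fun W => spPos_axisA_of_kt_eq_one, ?_, ?_, div_le_div_of_nonneg_right hsum hZ, ?_⟩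
  · simpa [Set.ncard_eq_toFinset_card'] using card_kt_eq_one m
  · simpa [Set.ncard_eq_toFinset_card', Nat.choose_two_right, Nat.sub_sub] using
      choose_le_card_kt_eq_two_spPos m
  · rw [div_pow]
    refine div_le_div_of_nonneg_right ((pow_le_pow_left₀ hlower hsum n).trans ?_) (pow_nonneg hZ n)
    exact sum_pow_le_sum_filter_prod _ _ (fun _ => pow_nonneg hφ0.le _) n _ helection

/-- In the Mallows model with reference vote `V : c_1 > … > c_m` and the unfolded
axis `A`: every vote at Kendall tau distance 1 from `V` is single-peaked w.r.t. `A`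
(and there are exactly `m−1` such votes); at least `(m−2)(m−3)/2` votes at distance
2 are single-peaked w.r.t. `A`; hence a single Mallows vote is single-peaked w.r.t.
`A` with probability at least `(1 + φ(m−1) + φ²(m−2)(m−3)/2)/Z`, and an election of
`n` independent Mallows votes is single-peaked with probability at least the `n`-th
power of this bound. -/
theorem mallows_single_peaked_bounds (m n : ℕ) (hm : 2 ≤ m) (hn : 1 ≤ n)
    (φ : ℝ) (hφ0 : 0 < φ) (hφ1 : φ ≤ 1) :
    (∀ W : Equiv.Perm (Fin m), kt W = 1 → SPpos W (axisA m)) ∧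
    {W : Equiv.Perm (Fin m) | kt W = 1}.ncard = m - 1 ∧
    (m - 2) * (m - 3) / 2 ≤
      {W : Equiv.Perm (Fin m) | kt W = 2 ∧ SPpos W (axisA m)}.ncard ∧
    (1 + φ * ((m : ℝ) - 1) + φ ^ 2 * (((m : ℝ) - 2) * ((m : ℝ) - 3) / 2)) / Zm m φ ≤
      (∑ W ∈ Finset.univ.filter fun W : Equiv.Perm (Fin m) => SPpos W (axisA m),
        φ ^ kt W) / Zm m φ ∧
    ((1 + φ * ((m : ℝ) - 1) + φ ^ 2 * (((m : ℝ) - 2) * ((m : ℝ) - 3) / 2)) / Zm m φ) ^ n ≤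
      (∑ P ∈ Finset.univ.filter fun P : Fin n → Equiv.Perm (Fin m) => SPElection P,
        ∏ i, φ ^ kt (P i)) / (Zm m φ) ^ n :=
  mallows_single_peaked_bounds_general m n hm φ hφ0
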